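/- For all weight modules V and W over Ū, the map c_{V,W} : V⊗W → W⊗V is invertible, with inverse c_{V,W}^{−1} = (Σ_{k=0}^{r−1} ((−1)^k {1}^{2k}/{k}!) q^{−k(k−1)/2} E^k ⊗ F^k) ∘ q^{−H⊗H/2} ∘ τ^{−1}, where q^{−H⊗H/2} multiplies v⊗w by q^{−λμ/2} for weight vectors v, w of weights λ, μ. -/

import Mathlib

noncomputable section

open scoped TensorProduct

namespace Unrolled

/-- `q^z = exp(π √-1 z / r)`. -/
def qc (r : ℕ) (z : ℂ) : ℂ := Complex.exp (Real.pi * Complex.I * z / r)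

/-- `{z} = q^z - q^{-z}`. -/
def qbrk (r : ℕ) (z : ℂ) : ℂ := qc r z - qc r (-z)

/-- `[z] = {z}/{1}`. -/
def qint (r : ℕ) (z : ℂ) : ℂ := qbrk r z / qbrk r 1

/-- `{n}! = ∏_{i=1}^n {i}`. -/
def qbrkFact (r n : ℕ) : ℂ := ∏ i ∈ Finset.range n, qbrk r ((i : ℂ) + 1)

/-- `[n]! = ∏_{i=1}^n [i]`. -/
def qintFact (r n : ℕ) : ℂ := ∏ i ∈ Finset.range n, qint r ((i : ℂ) + 1)

/-- The data of five operators `K, K⁻¹, H, E, F` on a complex vector space. -/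
structure Ops (V : Type) [AddCommGroup V] [Module ℂ V] where
  K : Module.End ℂ V
  Kinv : Module.End ℂ V
  H : Module.End ℂ V
  E : Module.End ℂ V
  F : Module.End ℂ V

/-- A module over the restricted unrolled quantum group `Ū = Ū_q^H(sl₂(ℂ))`:
five operators satisfying the defining relations of `Ū`. -/
structure Rep (r : ℕ) (V : Type) [AddCommGroup V] [Module ℂ V] extends Ops V where
  rel_KKinv : K * Kinv = 1
  rel_KinvK : Kinv * K = 1
  rel_HK : H * K = K * H
  rel_HE : H * E - E * H = (2 : ℂ) • E
  rel_HF : H * F - F * H = (-2 : ℂ) • F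
  rel_KE : K * E = qc r 2 • (E * K)
  rel_KF : K * F = qc r (-2) • (F * K)
  rel_EF : E * F - F * E = (qbrk r 1)⁻¹ • (K - Kinv)
  rel_Er : E ^ r = 0
  rel_Fr : F ^ r = 0

variable {V W U : Type} [AddCommGroup V] [Module ℂ V] [AddCommGroup W] [Module ℂ W]
  [AddCommGroup U] [Module ℂ U]

/-- A `Ū`-submodule: a subspace invariant under the five operators. -/
def Ops.Invariant (A : Ops V) (p : Submodule ℂ V) : Prop :=
  (∀ v ∈ p, A.K v ∈ p) ∧ (∀ v ∈ p, A.Kinv v ∈ p) ∧ (∀ v ∈ p, A.H v ∈ p) ∧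
    (∀ v ∈ p, A.E v ∈ p) ∧ (∀ v ∈ p, A.F v ∈ p)

/-- A simple `Ū`-module: nonzero, with no nonzero proper invariant subspace. -/
def Ops.IsSimple (A : Ops V) : Prop :=
  (∃ v : V, v ≠ 0) ∧ ∀ p : Submodule ℂ V, A.Invariant p → p = ⊥ ∨ p = ⊤

/-- A weight module: finite dimensional, a direct sum of `H`-eigenspaces, on which `K`
acts by `q^μ` on the `H`-eigenspace of eigenvalue `μ`. -/
structure IsWeight (r : ℕ) {V : Type} [AddCommGroup V] [Module ℂ V] (A : Ops V) : Prop where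
  finDim : FiniteDimensional ℂ V
  sup_eigenspaces : (⨆ μ : ℂ, Module.End.eigenspace A.H μ) = ⊤
  K_apply : ∀ (μ : ℂ), ∀ v ∈ Module.End.eigenspace A.H μ, A.K v = qc r μ • v

/-- A `Ū`-linear map. -/
def IsEquivariant (A : Ops V) (B : Ops W) (f : V →ₗ[ℂ] W) : Prop :=
  (∀ v, f (A.K v) = B.K (f v)) ∧ (∀ v, f (A.Kinv v) = B.Kinv (f v)) ∧
    (∀ v, f (A.H v) = B.H (f v)) ∧ (∀ v, f (A.E v) = B.E (f v)) ∧
    (∀ v, f (A.F v) = B.F (f v))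

/-- Isomorphism of `Ū`-modules. -/
def OpsIso (A : Ops V) (B : Ops W) : Prop :=
  ∃ e : V ≃ₗ[ℂ] W, IsEquivariant A B (e : V →ₗ[ℂ] W)

/-- The weight `α + r - 1 - 2i` of the basis vector `v_i` of the Verma module `V_α`. -/
def wt (r : ℕ) (α : ℂ) (i : ℕ) : ℂ := α + r - 1 - 2 * i

/-- The coefficient `{i}{i-α}/{1}²` occurring in `E v_i`. -/
def cE (r : ℕ) (α : ℂ) (i : ℕ) : ℂ := qbrk r i * qbrk r ((i : ℂ) - α) / qbrk r 1 ^ 2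

/-- The Verma module `V_α` of highest weight `α + r - 1`, realized on `Fin r → ℂ`
with basis `v_0, …, v_{r-1}`. -/
def vermaOps (r : ℕ) (α : ℂ) : Ops (Fin r → ℂ) where
  K := (Matrix.diagonal fun i : Fin r => qc r (wt r α (i : ℕ))).mulVecLin
  Kinv := (Matrix.diagonal fun i : Fin r => qc r (-wt r α (i : ℕ))).mulVecLin
  H := (Matrix.diagonal fun i : Fin r => wt r α (i : ℕ)).mulVecLin
  E := (Matrix.of fun i j : Fin r =>
    if (j : ℕ) = (i : ℕ) + 1 then cE r α (j : ℕ) else 0).mulVecLin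
  F := (Matrix.of fun i j : Fin r =>
    if (i : ℕ) = (j : ℕ) + 1 then (1 : ℂ) else 0).mulVecLin

/-- `α_{l,n} = (l-1)r + n + 1`, so that `S_n^{lr}` is a quotient of `V_{α_{l,n}}`. -/
def aln (r : ℕ) (l : ℤ) (n : ℕ) : ℂ := ((l : ℂ) - 1) * r + n + 1

/-- The simple module `S_n^{lr}` of highest weight `lr + n` and dimension `n+1`,
realized on `Fin (n+1) → ℂ`. -/
def smodOps (r : ℕ) (l : ℤ) (n : ℕ) : Ops (Fin (n + 1) → ℂ) where
  K := (Matrix.diagonal fun i : Fin (n + 1) => qc r (wt r (aln r l n) (i : ℕ))).mulVecLin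
  Kinv := (Matrix.diagonal fun i : Fin (n + 1) => qc r (-wt r (aln r l n) (i : ℕ))).mulVecLin
  H := (Matrix.diagonal fun i : Fin (n + 1) => wt r (aln r l n) (i : ℕ)).mulVecLin
  E := (Matrix.of fun i j : Fin (n + 1) =>
    if (j : ℕ) = (i : ℕ) + 1 then cE r (aln r l n) (j : ℕ) else 0).mulVecLin
  F := (Matrix.of fun i j : Fin (n + 1) =>
    if (i : ℕ) = (j : ℕ) + 1 then (1 : ℂ) else 0).mulVecLin

/-- `α ∈ (ℂ∖ℤ) ∪ rℤ`. -/
def goodα (r : ℕ) (α : ℂ) : Prop := (¬∃ n : ℤ, α = (n : ℂ)) ∨ ∃ m : ℤ, α = (r : ℂ) * m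

/-- The tensor product `Ū`-module structure induced by the coproduct `Δ`. -/
def tensorOps (A : Ops V) (B : Ops W) : Ops (V ⊗[ℂ] W) where
  K := TensorProduct.map A.K B.K
  Kinv := TensorProduct.map A.Kinv B.Kinv
  H := TensorProduct.map A.H (LinearMap.id : W →ₗ[ℂ] W) +
    TensorProduct.map (LinearMap.id : V →ₗ[ℂ] V) B.H
  E := TensorProduct.map (LinearMap.id : V →ₗ[ℂ] V) B.E + TensorProduct.map A.E B.K
  F := TensorProduct.map A.F (LinearMap.id : W →ₗ[ℂ] W) + TensorProduct.map A.Kinv B.F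

/-- The operator `Σ_{l=0}^{r-1} ({1}^{2l}/{l}!) q^{l(l-1)/2} E^l ⊗ F^l` on `V ⊗ W`. -/
def braidSum (r : ℕ) (A : Ops V) (B : Ops W) : Module.End ℂ (V ⊗[ℂ] W) :=
  ∑ l ∈ Finset.range r,
    (qbrk r 1 ^ (2 * l) / qbrkFact r l * qc r ((l : ℂ) * ((l : ℂ) - 1) / 2)) •
      TensorProduct.map (A.E ^ l) (B.F ^ l)

/-- The defining property of the operator `q^{H⊗H/2}` on `V ⊗ W`: it multiplies
`v ⊗ w` by `q^{λμ/2}` for weight vectors `v, w` of weights `λ, μ`. -/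
def IsqHH (r : ℕ) (A : Ops V) (B : Ops W) (Q : Module.End ℂ (V ⊗[ℂ] W)) : Prop :=
  ∀ (lam mu : ℂ) (v : V) (w : W),
    v ∈ Module.End.eigenspace A.H lam → w ∈ Module.End.eigenspace B.H mu →
      Q (v ⊗ₜ[ℂ] w) = qc r (lam * mu / 2) • (v ⊗ₜ[ℂ] w)

/-- The braiding `c_{V,W} = τ ∘ q^{H⊗H/2} ∘ Σ_l ({1}^{2l}/{l}!) q^{l(l-1)/2} E^l ⊗ F^l`,
where `Q` is the operator `q^{H⊗H/2}`. -/
def braidMap (r : ℕ) (A : Ops V) (B : Ops W) (Q : Module.End ℂ (V ⊗[ℂ] W)) :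
    V ⊗[ℂ] W →ₗ[ℂ] W ⊗[ℂ] V :=
  (TensorProduct.comm ℂ V W).toLinearMap ∘ₗ Q ∘ₗ braidSum r A B

/-- The operator `Σ_{k=0}^{r-1} ((-1)^k {1}^{2k}/{k}!) q^{-k(k-1)/2} E^k ⊗ F^k`. -/
def braidSumInv (r : ℕ) (A : Ops V) (B : Ops W) : Module.End ℂ (V ⊗[ℂ] W) :=
  ∑ k ∈ Finset.range r,
    ((-1 : ℂ) ^ k * qbrk r 1 ^ (2 * k) / qbrkFact r k *
        qc r (-((k : ℂ) * ((k : ℂ) - 1) / 2))) •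
      TensorProduct.map (A.E ^ k) (B.F ^ k)

/-- The defining property of the operator `q^{-H⊗H/2}` on `V ⊗ W`. -/
def IsqHHneg (r : ℕ) (A : Ops V) (B : Ops W) (Q : Module.End ℂ (V ⊗[ℂ] W)) : Prop :=
  ∀ (lam mu : ℂ) (v : V) (w : W),
    v ∈ Module.End.eigenspace A.H lam → w ∈ Module.End.eigenspace B.H mu →
      Q (v ⊗ₜ[ℂ] w) = qc r (-(lam * mu / 2)) • (v ⊗ₜ[ℂ] w)

/-- The claimed inverse braiding
`(Σ_k ((-1)^k {1}^{2k}/{k}!) q^{-k(k-1)/2} E^k ⊗ F^k) ∘ q^{-H⊗H/2} ∘ τ⁻¹`. -/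
def braidMapInv (r : ℕ) (A : Ops V) (B : Ops W) (Q' : Module.End ℂ (V ⊗[ℂ] W)) :
    W ⊗[ℂ] V →ₗ[ℂ] V ⊗[ℂ] W :=
  braidSumInv r A B ∘ₗ Q' ∘ₗ (TensorProduct.comm ℂ V W).symm.toLinearMap

/-!
Both `braidSum` and `braidSumInv` are polynomials in the single operator `N = E ⊗ F`, and
`N ^ r = 0`. Their coefficient sequences `a`, `b` (truncated `q`-exponentials) satisfy
`{l+1} a_{l+1} = {1}² q^l a_l` and `{k+1} b_{k+1} = -{1}² q^{-k} b_k`, so with the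
`q`-Leibniz rule `{k+l} = q^l {k} + q^{-k} {l}` the Cauchy product `p_m = Σ_{k+l=m} b_k a_l`
satisfies `{m} p_m = 0`. As `{m} ≠ 0` for `0 < m < r`, the two polynomials are inverse
modulo `X ^ r`. The operators `Q` and `Q'` are inverse on pure tensors of weight vectors,
which span `V ⊗ W`.
-/

section QNumbers

theorem qc_add (r : ℕ) (a b : ℂ) : qc r (a + b) = qc r a * qc r b := by
  rw [qc, qc, qc, ← Complex.exp_add]
  ring_nf

theorem qc_zero (r : ℕ) : qc r 0 = 1 := by
  rw [qc, mul_zero, zero_div, Complex.exp_zero]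

theorem qc_mul_qc_neg (r : ℕ) (a : ℂ) : qc r a * qc r (-a) = 1 := by
  rw [← qc_add, add_neg_cancel, qc_zero]

theorem qbrk_add (r : ℕ) (a b : ℂ) :
    qbrk r (a + b) = qc r b * qbrk r a + qc r (-a) * qbrk r b := by
  simp only [qbrk, mul_sub, ← qc_add]
  ring_nf

theorem qbrk_natCast_ne_zero {r j : ℕ} (hj : 0 < j) (hjr : j < r) : qbrk r j ≠ 0 := by
  intro h
  have hq : qc r j * qc r j = 1 := by
    rw [qbrk, sub_eq_zero] at h
    nth_rewrite 2 [h]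
    exact qc_mul_qc_neg r j
  rw [← qc_add, qc, Complex.exp_eq_one_iff] at hq
  obtain ⟨n, hn⟩ := hq
  have hr : (r : ℂ) ≠ 0 := Nat.cast_ne_zero.mpr (by omega)
  have hjn : ((j : ℤ) : ℂ) = ((n * r : ℤ) : ℂ) := by
    push_cast
    field_simp at hn
    linear_combination hn / 2
  have hjZ : (j : ℤ) = n * r := by exact_mod_cast hjn
  rcases lt_or_ge n 1 with hn1 | hn1 <;> nlinarith

theorem qbrkFact_succ (r n : ℕ) : qbrkFact r (n + 1) = qbrkFact r n * qbrk r ((n : ℂ) + 1) :=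
  Finset.prod_range_succ _ _

theorem qbrkFact_ne_zero {r n : ℕ} (h : n < r) : qbrkFact r n ≠ 0 :=
  Finset.prod_ne_zero_iff.mpr fun i hi => by
    exact_mod_cast qbrk_natCast_ne_zero (Nat.succ_pos i) (by simp at hi; omega)

end QNumbers

section Coefficients

open Finset

def braidCoeff (r l : ℕ) : ℂ :=
  qbrk r 1 ^ (2 * l) / qbrkFact r l * qc r ((l : ℂ) * ((l : ℂ) - 1) / 2)

def braidInvCoeff (r k : ℕ) : ℂ :=
  (-1 : ℂ) ^ k * qbrk r 1 ^ (2 * k) / qbrkFact r k * qc r (-((k : ℂ) * ((k : ℂ) - 1) / 2))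

theorem qbrk_mul_braidCoeff_succ {r l : ℕ} (hl : l + 1 < r) :
    qbrk r ((l : ℂ) + 1) * braidCoeff r (l + 1) = qbrk r 1 ^ 2 * qc r l * braidCoeff r l := by
  have hfact := qbrkFact_ne_zero (Nat.lt_of_succ_lt hl)
  have hbrk : qbrk r ((l : ℂ) + 1) ≠ 0 := by exact_mod_cast qbrk_natCast_ne_zero l.succ_pos hl
  have hexp : qc r (((l : ℂ) + 1) * ((l : ℂ) + 1 - 1) / 2) =
      qc r l * qc r ((l : ℂ) * ((l : ℂ) - 1) / 2) := by
    rw [← qc_add]; ring_nf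
  rw [braidCoeff, braidCoeff, qbrkFact_succ, Nat.cast_succ, hexp]
  field_simp
  ring

theorem qbrk_mul_braidInvCoeff_succ {r k : ℕ} (hk : k + 1 < r) :
    qbrk r ((k : ℂ) + 1) * braidInvCoeff r (k + 1) =
      -(qbrk r 1 ^ 2 * qc r (-k) * braidInvCoeff r k) := by
  have hfact := qbrkFact_ne_zero (Nat.lt_of_succ_lt hk)
  have hbrk : qbrk r ((k : ℂ) + 1) ≠ 0 := by exact_mod_cast qbrk_natCast_ne_zero k.succ_pos hk
  have hexp : qc r (-(((k : ℂ) + 1) * ((k : ℂ) + 1 - 1) / 2)) =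
      qc r (-k) * qc r (-((k : ℂ) * ((k : ℂ) - 1) / 2)) := by
    rw [← qc_add]; ring_nf
  rw [braidInvCoeff, braidInvCoeff, qbrkFact_succ, Nat.cast_succ, hexp]
  field_simp
  ring

theorem sum_antidiagonal_braidInvCoeff_mul_braidCoeff {r m : ℕ} (hm : m < r) :
    ∑ p ∈ antidiagonal m, braidInvCoeff r p.1 * braidCoeff r p.2 =
      if m = 0 then 1 else 0 := by
  rcases m with _ | n
  · simp [braidInvCoeff, braidCoeff, qbrkFact, qc_zero]
  have hrec : ∀ p ∈ antidiagonal n, p.1 + 1 < r ∧ p.2 + 1 < r := fun p hp => by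
    rw [HasAntidiagonal.mem_antidiagonal] at hp; omega
  have hzero : qbrk r ((n : ℂ) + 1) *
      ∑ p ∈ antidiagonal (n + 1), braidInvCoeff r p.1 * braidCoeff r p.2 = 0 :=
    calc qbrk r ((n : ℂ) + 1) *
          ∑ p ∈ antidiagonal (n + 1), braidInvCoeff r p.1 * braidCoeff r p.2
        = ∑ p ∈ antidiagonal (n + 1),
            (qc r p.2 * (qbrk r p.1 * braidInvCoeff r p.1) * braidCoeff r p.2 +
              qc r (-p.1) * braidInvCoeff r p.1 * (qbrk r p.2 * braidCoeff r p.2)) := by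
          rw [mul_sum]
          refine sum_congr rfl fun p hp => ?_
          have hsum : (n : ℂ) + 1 = p.1 + p.2 := by
            rw [HasAntidiagonal.mem_antidiagonal] at hp; exact_mod_cast hp.symm
          rw [hsum, qbrk_add]
          ring
      _ = ∑ p ∈ antidiagonal n,
            (qc r p.2 * (qbrk r ((p.1 : ℂ) + 1) * braidInvCoeff r (p.1 + 1)) * braidCoeff r p.2 +
              qc r (-p.1) * braidInvCoeff r p.1 *
                (qbrk r ((p.2 : ℂ) + 1) * braidCoeff r (p.2 + 1))) := by
          rw [sum_add_distrib, Nat.sum_antidiagonal_succ, Nat.sum_antidiagonal_succ',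
            sum_add_distrib]
          simp [qbrk]
      _ = 0 := sum_eq_zero fun p hp => by
          rw [qbrk_mul_braidInvCoeff_succ (hrec p hp).1, qbrk_mul_braidCoeff_succ (hrec p hp).2]
          ring
  have hn : qbrk r ((n : ℂ) + 1) ≠ 0 := by exact_mod_cast qbrk_natCast_ne_zero n.succ_pos hm
  simpa [hn] using hzero

end Coefficients

section Polynomials

open Polynomial Finset

theorem aeval_mul_aeval_eq_one_of_X_pow_dvd {K R : Type*} [CommRing K] [Ring R] [Algebra K R]
    {N : R} {n : ℕ} (hN : N ^ n = 0) {p q : K[X]} (h : X ^ n ∣ p * q - 1) :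
    aeval N p * aeval N q = 1 := by
  obtain ⟨g, hg⟩ := h
  rw [← map_mul, sub_eq_iff_eq_add.mp hg, map_add, map_mul, map_pow, aeval_X, hN, zero_mul,
    zero_add, map_one]

def braidPoly (r : ℕ) : ℂ[X] := ∑ l ∈ range r, C (braidCoeff r l) * X ^ l

def braidInvPoly (r : ℕ) : ℂ[X] := ∑ k ∈ range r, C (braidInvCoeff r k) * X ^ k

theorem coeff_braidPoly {r d : ℕ} (hd : d < r) : (braidPoly r).coeff d = braidCoeff r d := by
  simp [braidPoly, coeff_X_pow, hd]

theorem coeff_braidInvPoly {r d : ℕ} (hd : d < r) :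
    (braidInvPoly r).coeff d = braidInvCoeff r d := by
  simp [braidInvPoly, coeff_X_pow, hd]

theorem X_pow_dvd_braidInvPoly_mul_braidPoly_sub_one (r : ℕ) :
    X ^ r ∣ braidInvPoly r * braidPoly r - 1 := by
  refine X_pow_dvd_iff.mpr fun d hd => ?_
  have hcoeff : ∀ p ∈ antidiagonal d,
      (braidInvPoly r).coeff p.1 * (braidPoly r).coeff p.2 =
        braidInvCoeff r p.1 * braidCoeff r p.2 := fun p hp => by
    rw [HasAntidiagonal.mem_antidiagonal] at hp
    rw [coeff_braidInvPoly (by omega), coeff_braidPoly (by omega)]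
  rw [coeff_sub, coeff_mul, coeff_one, sum_congr rfl hcoeff,
    sum_antidiagonal_braidInvCoeff_mul_braidCoeff hd, sub_self]

end Polynomials

section Operators

variable {r : ℕ} (A : Ops V) (B : Ops W)

theorem braidSum_eq_aeval :
    braidSum r A B = Polynomial.aeval (TensorProduct.map A.E B.F) (braidPoly r) := by
  rw [braidPoly, map_sum, braidSum]
  refine Finset.sum_congr rfl fun l _ => ?_
  rw [map_mul, Polynomial.aeval_C, map_pow, Polynomial.aeval_X, TensorProduct.map_pow,
    ← Algebra.smul_def, braidCoeff]

theorem braidSumInv_eq_aeval :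
    braidSumInv r A B = Polynomial.aeval (TensorProduct.map A.E B.F) (braidInvPoly r) := by
  rw [braidInvPoly, map_sum, braidSumInv]
  refine Finset.sum_congr rfl fun k _ => ?_
  rw [map_mul, Polynomial.aeval_C, map_pow, Polynomial.aeval_X, TensorProduct.map_pow,
    ← Algebra.smul_def, braidInvCoeff]

variable {A}

theorem braidSumInv_mul_braidSum_eq_one (hE : A.E ^ r = 0) :
    braidSumInv r A B * braidSum r A B = 1 ∧ braidSum r A B * braidSumInv r A B = 1 := by
  have hN : TensorProduct.map A.E B.F ^ r = 0 := by
    rw [TensorProduct.map_pow, hE, TensorProduct.map_zero_left]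
  have hdvd := X_pow_dvd_braidInvPoly_mul_braidPoly_sub_one r
  rw [braidSum_eq_aeval, braidSumInv_eq_aeval]
  exact ⟨aeval_mul_aeval_eq_one_of_X_pow_dvd hN hdvd,
    aeval_mul_aeval_eq_one_of_X_pow_dvd hN (mul_comm (braidInvPoly r) _ ▸ hdvd)⟩

end Operators

theorem TensorProduct.ext_of_iSup_eq_top {R M N P : Type*} [CommSemiring R] [AddCommMonoid M]
    [AddCommMonoid N] [AddCommMonoid P] [Module R M] [Module R N] [Module R P] {ι κ : Type*}
    {p : ι → Submodule R M} {p' : κ → Submodule R N} (hp : iSup p = ⊤) (hp' : iSup p' = ⊤)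
    {f g : M ⊗[R] N →ₗ[R] P} (h : ∀ i j, ∀ m ∈ p i, ∀ n ∈ p' j, f (m ⊗ₜ n) = g (m ⊗ₜ n)) :
    f = g := by
  have hleft : ∀ i, ∀ m ∈ p i, ∀ n, f (m ⊗ₜ n) = g (m ⊗ₜ n) := fun i m hm n => by
    have hle : iSup p' ≤ LinearMap.eqLocus (f ∘ₗ TensorProduct.mk R M N m)
        (g ∘ₗ TensorProduct.mk R M N m) := iSup_le fun j n hn => h i j m hm n hn
    exact (hp' ▸ hle) Submodule.mem_top
  refine TensorProduct.ext' fun m n => ?_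
  have hle : iSup p ≤ LinearMap.eqLocus (f ∘ₗ (TensorProduct.mk R M N).flip n)
      (g ∘ₗ (TensorProduct.mk R M N).flip n) := iSup_le fun i m hm => hleft i m hm n
  exact (hp ▸ hle) Submodule.mem_top

theorem mul_eq_one_of_isqHHneg_of_isqHH {r : ℕ} {A : Ops V} {B : Ops W}
    (hA : (⨆ μ, Module.End.eigenspace A.H μ) = ⊤) (hB : (⨆ μ, Module.End.eigenspace B.H μ) = ⊤)
    {Q Q' : Module.End ℂ (V ⊗[ℂ] W)} (hQ : IsqHH r A B Q) (hQ' : IsqHHneg r A B Q') :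
    Q' * Q = 1 ∧ Q * Q' = 1 := by
  constructor <;>
  refine TensorProduct.ext_of_iSup_eq_top hA hB fun lam mu v hv w hw => ?_ <;>
  simp only [Module.End.mul_apply, Module.End.one_apply, hQ lam mu v w hv hw,
    hQ' lam mu v w hv hw, map_smul, smul_smul, qc_mul_qc_neg, mul_comm (qc r (-_)), one_smul]

theorem stmt9_general (r : ℕ) (ρV : Rep r V) (ρW : Rep r W)
    (hV : IsWeight r ρV.toOps) (hW : IsWeight r ρW.toOps)
    (Q : Module.End ℂ (V ⊗[ℂ] W)) (hQ : IsqHH r ρV.toOps ρW.toOps Q)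
    (Q' : Module.End ℂ (V ⊗[ℂ] W)) (hQ' : IsqHHneg r ρV.toOps ρW.toOps Q') :
    braidMapInv r ρV.toOps ρW.toOps Q' ∘ₗ braidMap r ρV.toOps ρW.toOps Q =
      LinearMap.id ∧
    braidMap r ρV.toOps ρW.toOps Q ∘ₗ braidMapInv r ρV.toOps ρW.toOps Q' =
      LinearMap.id := by
  obtain ⟨hSS, hSS'⟩ := braidSumInv_mul_braidSum_eq_one ρW.toOps ρV.rel_Er
  obtain ⟨hQQ, hQQ'⟩ :=
    mul_eq_one_of_isqHHneg_of_isqHH hV.sup_eigenspaces hW.sup_eigenspaces hQ hQ'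
  refine ⟨LinearMap.ext fun x => ?_, LinearMap.ext fun x => ?_⟩
  · simp only [braidMapInv, braidMap, LinearMap.comp_apply, LinearEquiv.coe_coe,
      LinearEquiv.symm_apply_apply]
    rw [← Module.End.mul_apply Q', hQQ, Module.End.one_apply, ← Module.End.mul_apply, hSS,
      Module.End.one_apply, LinearMap.id_apply]
  · simp only [braidMapInv, braidMap, LinearMap.comp_apply, LinearEquiv.coe_coe]
    rw [← Module.End.mul_apply (braidSum _ _ _), hSS', Module.End.one_apply,
      ← Module.End.mul_apply Q, hQQ', Module.End.one_apply, LinearEquiv.apply_symm_apply,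
      LinearMap.id_apply]

/-- The braiding `c_{V,W}` is invertible, with inverse as stated. -/
theorem stmt9 (r : ℕ) (hr : 2 ≤ r) (ρV : Rep r V) (ρW : Rep r W)
    (hV : IsWeight r ρV.toOps) (hW : IsWeight r ρW.toOps)
    (Q : Module.End ℂ (V ⊗[ℂ] W)) (hQ : IsqHH r ρV.toOps ρW.toOps Q)
    (Q' : Module.End ℂ (V ⊗[ℂ] W)) (hQ' : IsqHHneg r ρV.toOps ρW.toOps Q') :
    braidMapInv r ρV.toOps ρW.toOps Q' ∘ₗ braidMap r ρV.toOps ρW.toOps Q =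
      LinearMap.id ∧
    braidMap r ρV.toOps ρW.toOps Q ∘ₗ braidMapInv r ρV.toOps ρW.toOps Q' =
      LinearMap.id :=
  stmt9_general r ρV ρW hV hW Q hQ Q' hQ'

end Unrolled
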